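/- Let 0 ≤ d ≤ 1, R, k ∈ ℕ, h' ∈ ℤ with gcd(h',k) = 1, and α₁, α₂ ∈ {0,1,…,R−1}. Then there is an absolute constant C such that for all w ∈ ℂ with Re(w) ≥ 1: | e^{−2πid(h'/k + iw)} f_{R,α}(h'/k + iw) − (δ_{0 < α₁α₂ < Rd}/2) e^{2π(d − α₁α₂/R)(w − ih'/k)} + (δ_{(R−α₁)(R−α₂) < Rd}/2) e^{2π(d − (R−α₁)(R−α₂)/R)(w − ih'/k)} | ≤ C. -/

import Mathlib

/-!
Write `x = m₁ + α₁/R`, `y = m₂ + α₂/R`. The summand of `f_{R,α}` at `m` vanishes unless `xy > 0`,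
and then `Rx`, `Ry` are nonzero integers, so `Rxy = |x|·R|y| = |y|·R|x| ≥ max(|x|, |y|)`. Since
`m₁ = ⌊x⌋` and `m₂ = ⌊y⌋`, one of `|x|, |y|` is at least `1` unless `m = (0,0)` or `m = (-1,-1)`;
for all other `m` this gives `Rxy ≥ 1 ≥ d` and `4Rxy ≥ |m₁| + |m₂|`, so for `Im τ ≥ 1` the summands of
`e^{-2πidτ} f_{R,α}(τ)` are bounded by `2e^{2π} e^{-π(|m₁|+|m₂|)/2}`, a summable majorant.
The summands at `(0,0)` and `(-1,-1)` contribute `e^{2π(d - α₁α₂/R)(w - ih'/k)}/2` (only when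
`α₁α₂ > 0`) and `-e^{2π(d - (R-α₁)(R-α₂)/R)(w - ih'/k)}/2`: each cancels against the corresponding
subtracted term, or else its exponent has non-positive real part and it has modulus at most `1/2`.
-/

open scoped Real
open Filter MeasureTheory

noncomputable section

/-- `q^x = e^{2πiτx}` for real exponents. -/
def qpow (τ : ℂ) (x : ℝ) : ℂ := Complex.exp (2*π*Complex.I*τ*x)

/-- the indefinite theta function `f_{R,α}` -/
def fInd (R : ℕ) (α : ℤ × ℤ) (τ : ℂ) : ℂ :=
  (1/4) * ∑' m : ℤ × ℤ,
    (if ((m.1 : ℝ) + (α.1:ℝ)/R) ≠ 0 ∧ ((m.2 : ℝ) + (α.2:ℝ)/R) ≠ 0 then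
      ((Real.sign ((m.1 : ℝ) + (α.1:ℝ)/R) + Real.sign ((m.2 : ℝ) + (α.2:ℝ)/R) : ℝ) : ℂ)
        * qpow τ ((R:ℝ) * ((m.1 : ℝ) + (α.1:ℝ)/R) * ((m.2 : ℝ) + (α.2:ℝ)/R))
    else 0)

open Complex (I)

lemma norm_half_sub_ite_le {Q : Prop} [Decidable Q] {z : ℂ} (hz : ¬Q → ‖z‖ ≤ 1) :
    ‖z / 2 - (if Q then 1 else 0) / 2 * z‖ ≤ 1 / 2 := by
  split_ifs with hQ
  · simp [div_eq_inv_mul]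
  · have := hz hQ
    simp only [zero_div, zero_mul, sub_zero, norm_div, Complex.norm_ofNat]
    linarith

lemma norm_sub_sub_add_le {E : Type*} [SeminormedAddCommGroup E] (a b c p q : E) :
    ‖a - b + c - p + q‖ ≤ ‖a - p‖ + ‖b - q‖ + ‖c‖ :=
  calc ‖a - b + c - p + q‖ = ‖(a - p) + -(b - q) + c‖ := by congr 1; abel
    _ ≤ ‖a - p‖ + ‖-(b - q)‖ + ‖c‖ := norm_add₃_le
    _ = ‖a - p‖ + ‖b - q‖ + ‖c‖ := by rw [norm_neg]

lemma norm_tsum_compl_le {ι E : Type*} [SeminormedAddCommGroup E] {f : ι → E} {B : ι → ℝ}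
    {s : Set ι} (hB : Summable B) (hB0 : ∀ i, 0 ≤ B i) (h : ∀ i ∉ s, ‖f i‖ ≤ B i) :
    ‖∑' i : ↑sᶜ, f i‖ ≤ ∑' i, B i :=
  (tsum_of_norm_bounded (hB.subtype sᶜ).hasSum fun i => h i i.2).trans
    (Summable.tsum_subtype_le B sᶜ hB0 hB)

lemma qpow_add (τ : ℂ) (a b : ℝ) : qpow τ a * qpow τ b = qpow τ (a + b) := by
  rw [qpow, qpow, qpow, ← Complex.exp_add]
  push_cast
  ring_nf

lemma norm_qpow (τ : ℂ) (x : ℝ) : ‖qpow τ x‖ = Real.exp (-(2 * π * x * τ.im)) := by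
  rw [qpow, Complex.norm_exp, show 2 * π * I * τ * x = ((2 * π * x : ℝ) : ℂ) * τ * I by push_cast; ring,
    Complex.mul_I_re, Complex.im_ofReal_mul]

lemma norm_qpow_le_one {τ : ℂ} {x : ℝ} (hx : 0 ≤ x) (hτ : 0 ≤ τ.im) : ‖qpow τ x‖ ≤ 1 := by
  rw [norm_qpow, Real.exp_le_one_iff, neg_nonpos]
  positivity

lemma qpow_neg (τ : ℂ) (d : ℝ) : qpow τ (-d) = Complex.exp (-(2 * π * I * d * τ)) := by
  rw [qpow]
  push_cast
  ring_nf

lemma cexp_eq_qpow (u w : ℂ) (x : ℝ) :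
    Complex.exp (2 * π * x * (w - I * u)) = qpow (u + I * w) (-x) := by
  rw [qpow]
  congr 1
  push_cast
  linear_combination (2 * π * x * w) * Complex.I_sq

def indefSummand (R : ℕ) (τ : ℂ) (x y : ℝ) : ℂ :=
  if x ≠ 0 ∧ y ≠ 0 then ((Real.sign x + Real.sign y : ℝ) : ℂ) * qpow τ (R * x * y) else 0

lemma indefSummand_eq_ite (R : ℕ) (τ : ℂ) (x y : ℝ) :
    indefSummand R τ x y = if 0 < x * y then 2 * (Real.sign x : ℂ) * qpow τ (R * x * y) else 0 := by
  by_cases hxy : 0 < x * y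
  · rcases pos_and_pos_or_neg_and_neg_of_mul_pos hxy with ⟨hx, hy⟩ | ⟨hx, hy⟩
    · rw [indefSummand, if_pos ⟨hx.ne', hy.ne'⟩, if_pos hxy, Real.sign_of_pos hx,
        Real.sign_of_pos hy]
      push_cast
      ring
    · rw [indefSummand, if_pos ⟨hx.ne, hy.ne⟩, if_pos hxy, Real.sign_of_neg hx, Real.sign_of_neg hy]
      push_cast
      ring
  · rw [if_neg hxy, indefSummand, ite_eq_right_iff]
    rintro ⟨hx, hy⟩
    rcases hx.lt_or_gt with hx | hx <;> rcases hy.lt_or_gt with hy | hy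
    · exact absurd (mul_pos_of_neg_of_neg hx hy) hxy
    · simp [Real.sign_of_neg hx, Real.sign_of_pos hy]
    · simp [Real.sign_of_pos hx, Real.sign_of_neg hy]
    · exact absurd (mul_pos hx hy) hxy

def shiftedInt (R α : ℕ) (m : ℤ) : ℝ := m + α / R

lemma fInd_eq_tsum (R α₁ α₂ : ℕ) (τ : ℂ) :
    fInd R (α₁, α₂) τ =
      1 / 4 * ∑' m : ℤ × ℤ, indefSummand R τ (shiftedInt R α₁ m.1) (shiftedInt R α₂ m.2) := by
  simp [fInd, indefSummand, shiftedInt]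

section shiftedInt

variable {R α : ℕ}

lemma floor_shiftedInt (hα : α < R) (m : ℤ) : ⌊shiftedInt R α m⌋ = m := by
  have hR : (0 : ℝ) < R := by exact_mod_cast (Nat.zero_le α).trans_lt hα
  rw [shiftedInt, Int.floor_intCast_add, add_eq_left, Int.floor_eq_zero_iff]
  exact ⟨by positivity, (div_lt_one hR).2 (by exact_mod_cast hα)⟩

lemma abs_intCast_le_abs_shiftedInt_add_one (hα : α < R) (m : ℤ) :
    |(m : ℝ)| ≤ |shiftedInt R α m| + 1 := by
  have h₁ := Int.floor_le (shiftedInt R α m)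
  have h₂ := Int.lt_floor_add_one (shiftedInt R α m)
  rw [floor_shiftedInt hα] at h₁ h₂
  rw [abs_le]
  constructor <;> cases abs_cases (shiftedInt R α m) <;> linarith

lemma one_le_mul_abs_shiftedInt (hR : 0 < R) {m : ℤ} (h : shiftedInt R α m ≠ 0) :
    1 ≤ R * |shiftedInt R α m| := by
  have hint : (R : ℝ) * shiftedInt R α m = ((R * m + α : ℤ) : ℝ) := by
    rw [shiftedInt]; push_cast; field_simp
  have hne : (R * m + α : ℤ) ≠ 0 := by
    rintro h0; rw [h0, Int.cast_zero, mul_eq_zero] at hint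
    exact h (hint.resolve_left (by positivity))
  calc (1 : ℝ) ≤ |((R * m + α : ℤ) : ℝ)| := by exact_mod_cast Int.one_le_abs hne
    _ = R * |shiftedInt R α m| := by rw [← hint, abs_mul, Nat.abs_cast]

end shiftedInt

def principalIndices : Finset (ℤ × ℤ) := {(0, 0), (-1, -1)}

section nonprincipal

variable {R α₁ α₂ : ℕ} {m : ℤ × ℤ}

lemma mem_principalIndices_of_abs_lt_one (hα₁ : α₁ < R) (hα₂ : α₂ < R)
    (hxy : 0 < shiftedInt R α₁ m.1 * shiftedInt R α₂ m.2)
    (hx : |shiftedInt R α₁ m.1| < 1) (hy : |shiftedInt R α₂ m.2| < 1) : m ∈ principalIndices := by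
  obtain ⟨m₁, m₂⟩ := m
  rw [abs_lt] at hx hy
  simp only [principalIndices, Finset.mem_insert, Finset.mem_singleton, Prod.mk.injEq]
  rcases pos_and_pos_or_neg_and_neg_of_mul_pos hxy with ⟨hx0, hy0⟩ | ⟨hx0, hy0⟩
  · left
    rw [← floor_shiftedInt hα₁ m₁, ← floor_shiftedInt hα₂ m₂, Int.floor_eq_zero_iff,
      Int.floor_eq_zero_iff]
    exact ⟨⟨hx0.le, hx.2⟩, ⟨hy0.le, hy.2⟩⟩
  · right
    rw [← floor_shiftedInt hα₁ m₁, ← floor_shiftedInt hα₂ m₂, Int.floor_eq_iff, Int.floor_eq_iff]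
    push_cast
    exact ⟨⟨hx.1.le, by linarith⟩, ⟨hy.1.le, by linarith⟩⟩

lemma one_le_and_natAbs_add_natAbs_le (hR : 0 < R) (hα₁ : α₁ < R) (hα₂ : α₂ < R)
    (hm : m ∉ principalIndices) (hxy : 0 < shiftedInt R α₁ m.1 * shiftedInt R α₂ m.2) :
    1 ≤ R * shiftedInt R α₁ m.1 * shiftedInt R α₂ m.2 ∧
      (m.1.natAbs + m.2.natAbs : ℝ) ≤ 4 * (R * shiftedInt R α₁ m.1 * shiftedInt R α₂ m.2) := by
  set x := shiftedInt R α₁ m.1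
  set y := shiftedInt R α₂ m.2
  have hRx := one_le_mul_abs_shiftedInt hR (left_ne_zero_of_mul hxy.ne')
  have hRy := one_le_mul_abs_shiftedInt hR (right_ne_zero_of_mul hxy.ne')
  have hP : R * x * y = R * |x| * |y| := by
    rw [mul_assoc, mul_assoc, ← abs_mul, abs_of_pos hxy]
  have hPx : |x| ≤ R * x * y := by nlinarith [abs_nonneg x]
  have hPy : |y| ≤ R * x * y := by nlinarith [abs_nonneg y]
  have hxy1 : 1 ≤ |x| ∨ 1 ≤ |y| := by
    by_contra! h
    exact hm (mem_principalIndices_of_abs_lt_one hα₁ hα₂ hxy h.1 h.2)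
  have hm₁ := abs_intCast_le_abs_shiftedInt_add_one hα₁ m.1
  have hm₂ := abs_intCast_le_abs_shiftedInt_add_one hα₂ m.2
  simp only [Nat.cast_natAbs, Int.cast_abs]
  constructor <;> rcases hxy1 with h | h <;> linarith

end nonprincipal

def majorant (m : ℤ × ℤ) : ℝ := Real.exp (-(π / 2)) ^ m.1.natAbs * Real.exp (-(π / 2)) ^ m.2.natAbs

lemma majorant_nonneg (m : ℤ × ℤ) : 0 ≤ majorant m := by
  unfold majorant
  positivity

lemma summable_majorant : Summable majorant := by
  have hr : Real.exp (-(π / 2)) < 1 := Real.exp_lt_one_iff.2 (by linarith [Real.pi_pos])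
  have hgeom : Summable fun n : ℤ => Real.exp (-(π / 2)) ^ n.natAbs := by
    apply Summable.of_nat_of_neg <;> simpa using summable_geometric_of_lt_one (by positivity) hr
  exact hgeom.mul_of_nonneg hgeom (fun _ => by positivity) (fun _ => by positivity)

lemma norm_qpow_neg_mul_indefSummand_le {R α₁ α₂ : ℕ} {d : ℝ} {τ : ℂ} {m : ℤ × ℤ} (hR : 0 < R)
    (hα₁ : α₁ < R) (hα₂ : α₂ < R) (hd : d ≤ 1) (hτ : 1 ≤ τ.im) (hm : m ∉ principalIndices) :
    ‖qpow τ (-d) * indefSummand R τ (shiftedInt R α₁ m.1) (shiftedInt R α₂ m.2)‖ ≤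
      2 * Real.exp (2 * π) * majorant m := by
  rw [indefSummand_eq_ite]
  split_ifs with hxy
  swap
  · rw [mul_zero, norm_zero]
    have := majorant_nonneg m
    positivity
  obtain ⟨hP1, hP4⟩ := one_le_and_natAbs_add_natAbs_le hR hα₁ hα₂ hm hxy
  set P := R * shiftedInt R α₁ m.1 * shiftedInt R α₂ m.2
  have hsign : ‖2 * (Real.sign (shiftedInt R α₁ m.1) : ℂ)‖ ≤ 2 := by
    rcases Real.sign_apply_eq (shiftedInt R α₁ m.1) with h | h | h <;> simp [h]
  have hexp : -(2 * π * (-d + P) * τ.im) ≤ 2 * π - π / 2 * (m.1.natAbs + m.2.natAbs) := by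
    nlinarith [Real.pi_pos, mul_nonneg (sub_nonneg.2 (hd.trans hP1)) (sub_nonneg.2 hτ)]
  calc ‖qpow τ (-d) * (2 * (Real.sign (shiftedInt R α₁ m.1) : ℂ) * qpow τ P)‖
      = ‖2 * (Real.sign (shiftedInt R α₁ m.1) : ℂ)‖ * ‖qpow τ (-d + P)‖ := by
        rw [mul_left_comm, qpow_add, norm_mul]
    _ ≤ 2 * Real.exp (2 * π - π / 2 * (m.1.natAbs + m.2.natAbs)) := by
        rw [norm_qpow]
        gcongr
    _ = 2 * Real.exp (2 * π) * majorant m := by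
        simp only [majorant, ← Real.exp_nat_mul, mul_assoc, ← Real.exp_add]
        ring_nf

section principal

variable {R α₁ α₂ : ℕ} {τ : ℂ}

lemma indefSummand_shiftedInt_zero (hR : 0 < R) :
    indefSummand R τ (shiftedInt R α₁ 0) (shiftedInt R α₂ 0) =
      if 0 < (α₁ * α₂ : ℝ) then 2 * qpow τ (α₁ * α₂ / R) else 0 := by
  have hR' : (0 : ℝ) < R := Nat.cast_pos.2 hR
  have hP : (R : ℝ) * (α₁ / R) * (α₂ / R) = α₁ * α₂ / R := by field_simp
  have hpos : 0 < (α₁ / R : ℝ) * (α₂ / R) ↔ 0 < (α₁ * α₂ : ℝ) := by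
    rw [div_mul_div_comm, div_pos_iff_of_pos_right (by positivity)]
  simp only [indefSummand_eq_ite, shiftedInt, Int.cast_zero, zero_add, hP, hpos]
  split_ifs with h
  · rw [Real.sign_of_pos (div_pos (pos_of_mul_pos_left h (Nat.cast_nonneg _)) hR')]
    simp
  · rfl

lemma indefSummand_shiftedInt_neg_one (hR : 0 < R) (hα₁ : α₁ < R) (hα₂ : α₂ < R) :
    indefSummand R τ (shiftedInt R α₁ (-1)) (shiftedInt R α₂ (-1)) =
      -2 * qpow τ ((R - α₁) * (R - α₂) / R) := by
  have hR' : (0 : ℝ) < R := Nat.cast_pos.2 hR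
  have neg : ∀ {α : ℕ}, α < R → shiftedInt R α (-1) < 0 := fun hα => by
    rw [shiftedInt, Int.cast_neg, Int.cast_one, neg_add_lt_iff_lt_add, add_zero,
      div_lt_one hR']
    exact_mod_cast hα
  rw [indefSummand_eq_ite, if_pos (mul_pos_of_neg_of_neg (neg hα₁) (neg hα₂)),
    Real.sign_of_neg (neg hα₁)]
  congr 2
  · simp
  · simp only [shiftedInt]
    field_simp
    ring

end principal

section bounds

variable {R α₁ α₂ : ℕ} {d : ℝ}

lemma norm_principal_zero_sub_le {u w : ℂ} (hR : 0 < R) (hτ : 0 ≤ (u + I * w).im) :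
    ‖(if 0 < (α₁ * α₂ : ℝ) then qpow (u + I * w) (α₁ * α₂ / R - d) / 2 else 0)
      - (if 0 < (α₁ * α₂ : ℝ) ∧ (α₁ * α₂ : ℝ) < R * d then (1 : ℂ) else 0) / 2
          * Complex.exp (2 * π * (d - (α₁ * α₂ : ℝ) / R) * (w - I * u))‖ ≤ 1 / 2 := by
  have hE : Complex.exp (2 * π * (d - (α₁ * α₂ : ℝ) / R) * (w - I * u)) =
      qpow (u + I * w) (α₁ * α₂ / R - d) := by
    rw [← neg_neg ((α₁ * α₂ / R - d : ℝ)), ← cexp_eq_qpow]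
    push_cast
    ring_nf
  rw [hE]
  by_cases hpos : 0 < (α₁ * α₂ : ℝ)
  · simp only [hpos, if_true, true_and]
    refine norm_half_sub_ite_le fun h => norm_qpow_le_one ?_ hτ
    rw [sub_nonneg, le_div_iff₀ (Nat.cast_pos.2 hR)]
    linarith [not_lt.1 h]
  · simp [hpos]

lemma norm_principal_neg_one_sub_le {u w : ℂ} (hR : 0 < R) (hτ : 0 ≤ (u + I * w).im) :
    ‖qpow (u + I * w) ((R - α₁) * (R - α₂) / R - d) / 2
      - (if ((R - α₁) * (R - α₂) : ℝ) < R * d then (1 : ℂ) else 0) / 2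
          * Complex.exp (2 * π * (d - ((R : ℝ) - α₁) * ((R : ℝ) - α₂) / R) * (w - I * u))‖ ≤ 1 / 2 := by
  have hE : Complex.exp (2 * π * (d - ((R : ℝ) - α₁) * ((R : ℝ) - α₂) / R) * (w - I * u)) =
      qpow (u + I * w) ((R - α₁) * (R - α₂) / R - d) := by
    rw [← neg_neg (((R - α₁) * (R - α₂) / R - d : ℝ)), ← cexp_eq_qpow]
    push_cast
    ring_nf
  rw [hE]
  refine norm_half_sub_ite_le fun h => norm_qpow_le_one ?_ hτ
  rw [sub_nonneg, le_div_iff₀ (Nat.cast_pos.2 hR)]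
  linarith [not_lt.1 h]

def nonprincipalPart (R α₁ α₂ : ℕ) (d : ℝ) (τ : ℂ) : ℂ :=
  ∑' m : ↑(principalIndices : Set (ℤ × ℤ))ᶜ,
    qpow τ (-d) * indefSummand R τ (shiftedInt R α₁ (m : ℤ × ℤ).1) (shiftedInt R α₂ (m : ℤ × ℤ).2)

variable {τ : ℂ}

lemma norm_nonprincipalPart_le (hR : 0 < R) (hα₁ : α₁ < R) (hα₂ : α₂ < R) (hd : d ≤ 1)
    (hτ : 1 ≤ τ.im) :
    ‖nonprincipalPart R α₁ α₂ d τ‖ ≤ 2 * Real.exp (2 * π) * ∑' m, majorant m := by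
  rw [← tsum_mul_left]
  exact norm_tsum_compl_le (summable_majorant.mul_left _)
    (fun m => mul_nonneg (by positivity) (majorant_nonneg m))
    fun m hm => norm_qpow_neg_mul_indefSummand_le hR hα₁ hα₂ hd hτ hm

lemma qpow_neg_mul_fInd_eq (hR : 0 < R) (hα₁ : α₁ < R) (hα₂ : α₂ < R) (hd : d ≤ 1)
    (hτ : 1 ≤ τ.im) :
    qpow τ (-d) * fInd R (α₁, α₂) τ =
      (if 0 < (α₁ * α₂ : ℝ) then qpow τ (α₁ * α₂ / R - d) / 2 else 0)
        - qpow τ ((R - α₁) * (R - α₂) / R - d) / 2 + nonprincipalPart R α₁ α₂ d τ / 4 := by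
  set g : ℤ × ℤ → ℂ := fun m =>
    qpow τ (-d) * indefSummand R τ (shiftedInt R α₁ m.1) (shiftedInt R α₂ m.2)
  have hsum : Summable g :=
    Summable.of_norm_bounded_eventually (summable_majorant.mul_left _)
      (principalIndices.eventually_cofinite_notMem.mono
        fun m hm => norm_qpow_neg_mul_indefSummand_le hR hα₁ hα₂ hd hτ hm)
  have hpair : ∑ m ∈ principalIndices, g m = g (0, 0) + g (-1, -1) := Finset.sum_pair (by decide)
  have hsplit := hsum.sum_add_tsum_compl (s := principalIndices)
  rw [hpair] at hsplit
  rw [fInd_eq_tsum, mul_left_comm, ← tsum_mul_left, ← hsplit, nonprincipalPart]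
  simp only [g, indefSummand_shiftedInt_zero hR, indefSummand_shiftedInt_neg_one hR hα₁ hα₂]
  have hq : ∀ e : ℝ, qpow τ (-d) * qpow τ e = qpow τ (e - d) := fun e => by
    rw [qpow_add, neg_add_eq_sub]
  split_ifs <;> simp only [mul_zero, mul_left_comm (qpow τ (-d)), hq] <;> ring

end bounds

/-- Lemma `indef_part_nonprincipal`: an absolute bound for the
nonprincipal part of `e^{−2πidτ} f_{R,α}(τ)` at `τ = h'/k + iw`, `Re w ≥ 1`. -/
theorem stmt15 :
    ∃ C : ℝ, ∀ d : ℝ, 0 ≤ d → d ≤ 1 → ∀ R k : ℕ, 1 ≤ R → 1 ≤ k →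
      ∀ h' : ℤ, Int.gcd h' k = 1 → ∀ α₁ α₂ : ℕ, α₁ < R → α₂ < R →
        ∀ w : ℂ, 1 ≤ w.re →
          ‖
            (Complex.exp (-(2*π*Complex.I*d*((h':ℂ)/k + Complex.I*w)))
                * fInd R ((α₁:ℤ), (α₂:ℤ)) ((h':ℂ)/k + Complex.I*w)
              - (if 0 < (α₁*α₂:ℝ) ∧ (α₁*α₂:ℝ) < (R:ℝ)*d then (1:ℂ) else 0)/2
                  * Complex.exp (2*π*(d - (α₁*α₂:ℝ)/R)*(w - Complex.I*h'/k))
              + (if (((R:ℝ)-α₁)*((R:ℝ)-α₂) : ℝ) < (R:ℝ)*d then (1:ℂ) else 0)/2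
                  * Complex.exp (2*π*(d - (((R:ℝ)-α₁)*((R:ℝ)-α₂))/R)*(w - Complex.I*h'/k)))‖
          ≤ C := by
  refine ⟨1 + Real.exp (2 * π) / 2 * ∑' m, majorant m, ?_⟩
  intro d _ hd R k hR _ h' _ α₁ α₂ hα₁ hα₂ w hw
  have hτ : 1 ≤ ((h' : ℂ) / k + I * w).im := by simpa using hw
  rw [← qpow_neg, qpow_neg_mul_fInd_eq hR hα₁ hα₂ hd hτ, mul_div_assoc I]
  refine (norm_sub_sub_add_le _ _ _ _ _).trans ?_
  have h₀ := norm_principal_zero_sub_le (α₁ := α₁) (α₂ := α₂) (d := d) hR (zero_le_one.trans hτ)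
  have h₁ := norm_principal_neg_one_sub_le (α₁ := α₁) (α₂ := α₂) (d := d) hR (zero_le_one.trans hτ)
  have h₂ := norm_nonprincipalPart_le hR hα₁ hα₂ hd hτ
  rw [norm_div, Complex.norm_ofNat]
  linarith
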